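/- Setting ε_i = 1/(2^(25+2i)·t(i)^(1/2)) where t is the tower function, one has lim_{i→∞} (log* ε_i^(-2))/i = 1, and consequently t(i)/4 = Ω(ε_i^(-2)/2^(5·log* ε_i^(-2))). -/

import Mathlib

def tower : ℕ → ℕ
  | 0 => 1
  | n+1 => 2 ^ tower n

/-- The iterated logarithm: the number of times `log₂` must be applied to `x`
to obtain a value at most `1`. -/
noncomputable def logStar (x : ℝ) : ℕ := sInf {n : ℕ | (Real.logb 2)^[n] x ≤ 1}

noncomputable def epsSeq (i : ℕ) : ℝ := 1 / (2^(25 + 2*i) * Real.sqrt (tower i))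

/-!
Write `x_i = ε_i⁻² = 2^(50+4i) · t(i)`. For `i ≥ 7` this lies between `t(i)` and
`t(i+1) = 2^t(i)`, and `log*` is squeezed by the tower: `t(n) ≤ x ≤ t(n+1)` forces
`n ≤ log* x ≤ n + 1`. Hence `log* x_i / i → 1`, and since `log* x_i ≥ i`,
`x_i / 2^(5 log* x_i) ≤ 2^(50+4i) t(i) / 2^(5i) ≤ t(i) / 4` once `i ≥ 52`.
-/

open Filter Topology

lemma one_le_tower (n : ℕ) : 1 ≤ tower n := by
  cases n with
  | zero => rfl
  | succ n => exact Nat.one_le_two_pow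

lemma lt_tower (n : ℕ) : n < tower n := by
  induction n with
  | zero => exact Nat.one_pos
  | succ n ih => exact lt_of_le_of_lt ih Nat.lt_two_pow_self

lemma logb_tower_succ (n : ℕ) : Real.logb 2 (tower (n + 1)) = tower n := by
  simp [tower, Real.logb_pow]

lemma exists_iterate_logb_le_one_of_le_tower {x : ℝ} {n : ℕ} (h : x ≤ tower n) :
    ∃ k ≤ n, (Real.logb 2)^[k] x ≤ 1 := by
  induction n generalizing x with
  | zero => exact ⟨0, le_rfl, by simpa [tower] using h⟩
  | succ n ih =>
    rcases le_or_gt x 1 with hx | hx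
    · exact ⟨0, Nat.zero_le _, hx⟩
    · have hlog : Real.logb 2 x ≤ tower n :=
        logb_tower_succ n ▸ Real.logb_le_logb_of_le (by norm_num) (by linarith) h
      obtain ⟨k, hk, hiter⟩ := ih hlog
      exact ⟨k + 1, by omega, hiter⟩

lemma exists_iterate_logb_le_one (x : ℝ) : ∃ k, (Real.logb 2)^[k] x ≤ 1 := by
  have hx : x ≤ tower ⌈x⌉₊ :=
    (Nat.le_ceil x).trans (by exact_mod_cast (lt_tower _).le)
  obtain ⟨k, -, hk⟩ := exists_iterate_logb_le_one_of_le_tower hx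
  exact ⟨k, hk⟩

lemma logStar_le_of_le_tower {x : ℝ} {n : ℕ} (h : x ≤ tower n) : logStar x ≤ n := by
  obtain ⟨k, hk, hiter⟩ := exists_iterate_logb_le_one_of_le_tower h
  exact (Nat.sInf_le hiter).trans hk

lemma tower_le_iterate_logb {x : ℝ} {m k : ℕ} (h : tower (m + k) ≤ x) :
    tower k ≤ (Real.logb 2)^[m] x := by
  induction m generalizing x with
  | zero => simpa using h
  | succ m ih =>
    have hpos : (0 : ℝ) < tower (m + k + 1) := by exact_mod_cast one_le_tower _
    rw [show m + 1 + k = m + k + 1 by omega] at h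
    have hlog : (tower (m + k) : ℝ) ≤ Real.logb 2 x :=
      logb_tower_succ (m + k) ▸ Real.logb_le_logb_of_le (by norm_num) hpos h
    exact ih hlog

lemma le_logStar_of_tower_le {x : ℝ} {n : ℕ} (h : tower n ≤ x) : n ≤ logStar x := by
  -- `sInf ∅ = 0`, so this needs the defining set of `logStar x` to be nonempty
  have hmem : (Real.logb 2)^[logStar x] x ≤ 1 := Nat.sInf_mem (exists_iterate_logb_le_one x)
  by_contra! hlt
  obtain ⟨j, rfl⟩ : ∃ j, n = logStar x + (j + 1) := ⟨n - logStar x - 1, by omega⟩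
  have hiter := tower_le_iterate_logb h
  have htower : (1 : ℝ) < tower (j + 1) := by
    exact_mod_cast Nat.one_lt_two_pow_iff.mpr (Nat.one_le_iff_ne_zero.mp (one_le_tower j))
  linarith

lemma epsSeq_zpow_neg_two (i : ℕ) : epsSeq i ^ (-2 : ℤ) = 2 ^ (50 + 4 * i) * tower i := by
  have ht : (0 : ℝ) ≤ tower i := Nat.cast_nonneg _
  rw [epsSeq, zpow_neg, zpow_two, ← sq, div_pow, mul_pow, ← pow_mul, Real.sq_sqrt ht,
    one_pow, one_div, inv_inv]
  ring_nf

lemma two_pow_mul_tower_le_tower_succ {i : ℕ} (hi : 7 ≤ i) :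
    (2 : ℝ) ^ (50 + 4 * i) * tower i ≤ tower (i + 1) := by
  obtain ⟨j, rfl⟩ : ∃ j, i = j + 1 := ⟨i - 1, by omega⟩
  set S := tower j
  have hjS : j < S := lt_tower j
  -- `2^S = 64 · 2^(S-6) > 64 (S - 6)`, which beats `54 + 4j + S` as soon as `S ≥ 7`
  have hsplit : 2 ^ S = 2 ^ 6 * 2 ^ (S - 6) := by rw [← pow_add]; congr 1; omega
  have hlt : S - 6 < 2 ^ (S - 6) := Nat.lt_two_pow_self
  have hnat : 2 ^ (50 + 4 * (j + 1)) * 2 ^ S ≤ 2 ^ (2 ^ S) := by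
    rw [← pow_add]
    exact Nat.pow_le_pow_right (by norm_num) (by omega)
  have htower : tower (j + 1 + 1) = 2 ^ (2 ^ S) := rfl
  rw [htower]
  exact_mod_cast hnat

lemma logStar_two_pow_mul_tower_bounds {i : ℕ} (hi : 7 ≤ i) :
    i ≤ logStar (2 ^ (50 + 4 * i) * tower i) ∧
      logStar (2 ^ (50 + 4 * i) * tower i) ≤ i + 1 := by
  refine ⟨le_logStar_of_tower_le ?_,
    logStar_le_of_le_tower (two_pow_mul_tower_le_tower_succ hi)⟩
  exact le_mul_of_one_le_left (Nat.cast_nonneg _) (one_le_pow₀ (by norm_num))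

lemma tendsto_div_natCast_of_le_of_le_add_one {f : ℕ → ℝ}
    (hf : ∀ᶠ n : ℕ in atTop, (n : ℝ) ≤ f n ∧ f n ≤ n + 1) :
    Tendsto (fun n => f n / n) atTop (𝓝 1) := by
  have hupper : Tendsto (fun n : ℕ => 1 + (n : ℝ)⁻¹) atTop (𝓝 1) := by
    simpa using tendsto_inv_atTop_nhds_zero_nat.const_add (1 : ℝ)
  refine tendsto_of_tendsto_of_tendsto_of_le_of_le' tendsto_const_nhds hupper ?_ ?_
  all_goals
    filter_upwards [hf, eventually_gt_atTop 0] with n ⟨hlow, hup⟩ hn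
    have hn' : (0 : ℝ) < n := Nat.cast_pos.mpr hn
  · rwa [le_div_iff₀ hn', one_mul]
  · rw [div_le_iff₀ hn', add_mul, inv_mul_cancel₀ hn'.ne', one_mul]
    linarith

lemma two_pow_mul_div_two_pow_le {t : ℝ} (ht : 0 ≤ t) {i L : ℕ} (hi : 52 ≤ i)
    (hL : i ≤ L) :
    2 ^ (50 + 4 * i) * t / 2 ^ (5 * L) ≤ t / 4 := by
  have hpow : (2 : ℝ) ^ (50 + 4 * i) * 4 ≤ 2 ^ (5 * L) := by
    rw [show (4 : ℝ) = 2 ^ 2 by norm_num, ← pow_add]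
    exact pow_le_pow_right₀ (by norm_num) (by omega)
  rw [div_le_div_iff₀ (by positivity) (by norm_num)]
  nlinarith

theorem stmt16 :
    Filter.Tendsto (fun i : ℕ => (logStar ((epsSeq i)^(-2:ℤ)) : ℝ) / i)
      Filter.atTop (nhds 1) ∧
    ∃ C : ℝ, 0 < C ∧ ∀ᶠ i in Filter.atTop,
      C * ((epsSeq i)^(-2:ℤ) / 2^(5 * logStar ((epsSeq i)^(-2:ℤ)))) ≤ (tower i : ℝ) / 4 := by
  simp only [epsSeq_zpow_neg_two]
  refine ⟨tendsto_div_natCast_of_le_of_le_add_one ?_, 1, one_pos, ?_⟩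
  · filter_upwards [eventually_ge_atTop 7] with i hi
    exact_mod_cast logStar_two_pow_mul_tower_bounds hi
  · filter_upwards [eventually_ge_atTop 52] with i hi
    rw [one_mul]
    exact two_pow_mul_div_two_pow_le (Nat.cast_nonneg _) hi
      (logStar_two_pow_mul_tower_bounds (by omega)).1
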